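/- arXiv:1703.09687 — 5 statements merged into one kernel-verified Lean document; each statement's English description precedes it below -/
import Mathlib

section
/- For every k ≥ 3 and every r ≥ 1, there is a coloring of the edges of the complete k-uniform hypergraph on r + 3k − 4 vertices with r colors containing no monochromatic copy of the loose k-path of length three; equivalently, R(P^{(k)}; r) ≥ r + 3k − 3. -/
/-!
Reserve `r - 1` vertices as centres. An edge through a centre gets the colour of one of its
centres, and every other edge gets the last colour. Two edges of a centre colour share that
centre, so they cannot be the two disjoint end edges of a loose path. The edges of the last
colour live on the remaining `3k - 3` vertices, whereas a loose path of length three spans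
`3k - 2` vertices.
-/

open Finset

variable {V : Type*} [DecidableEq V]

structure IsLoosePath3 (k : ℕ) (e₁ e₂ e₃ : Finset V) : Prop where
  card₁ : #e₁ = k
  card₂ : #e₂ = k
  card₃ : #e₃ = k
  card_inter₁₂ : #(e₁ ∩ e₂) = 1
  card_inter₂₃ : #(e₂ ∩ e₃) = 1
  inter₁₃ : e₁ ∩ e₃ = ∅

namespace IsLoosePath3

variable {k : ℕ} {e₁ e₂ e₃ : Finset V}

theorem card_union (hP : IsLoosePath3 k e₁ e₂ e₃) : #(e₁ ∪ e₂ ∪ e₃) = 3 * k - 2 := by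
  have h₁₂ := card_union_add_card_inter e₁ e₂
  have h₁₂₃ := card_union_add_card_inter (e₁ ∪ e₂) e₃
  rw [union_inter_distrib_right, hP.inter₁₃, empty_union] at h₁₂₃
  have := hP.card₁; have := hP.card₂; have := hP.card₃
  have := hP.card_inter₁₂; have := hP.card_inter₂₃
  omega

theorem card_le_of_subset (hP : IsLoosePath3 k e₁ e₂ e₃) {W : Finset V}
    (h₁ : e₁ ⊆ W) (h₂ : e₂ ⊆ W) (h₃ : e₃ ⊆ W) : 3 * k - 2 ≤ #W :=
  hP.card_union ▸ card_le_card (union_subset (union_subset h₁ h₂) h₃)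

theorem disjoint₁₃ (hP : IsLoosePath3 k e₁ e₂ e₃) : Disjoint e₁ e₃ :=
  disjoint_iff_inter_eq_empty.2 hP.inter₁₃

end IsLoosePath3

section CentreColoring

variable {m : ℕ}

noncomputable def centreColoring (c : Fin m → V) (e : Finset V) : Fin (m + 1) :=
  if h : ∃ i, c i ∈ e then h.choose.castSucc else Fin.last m

theorem mem_of_centreColoring_eq_castSucc {c : Fin m → V} {e : Finset V} {i : Fin m}
    (h : centreColoring c e = i.castSucc) : c i ∈ e := by
  unfold centreColoring at h
  split_ifs at h with hc
  · exact Fin.castSucc_injective m h ▸ hc.choose_spec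
  · exact absurd h.symm (Fin.castSucc_ne_last i)

theorem notMem_of_centreColoring_eq_last {c : Fin m → V} {e : Finset V}
    (h : centreColoring c e = Fin.last m) (i : Fin m) : c i ∉ e := by
  unfold centreColoring at h
  split_ifs at h with hc
  · exact absurd h (Fin.castSucc_ne_last _)
  · exact fun hi => hc ⟨i, hi⟩

theorem subset_compl_of_centreColoring_eq_last [Fintype V] {c : Fin m ↪ V} {e : Finset V}
    (h : centreColoring c e = Fin.last m) : e ⊆ (univ.map c)ᶜ := fun v hv => by
  simp only [mem_compl, mem_map, mem_univ, true_and, not_exists]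
  rintro i rfl
  exact notMem_of_centreColoring_eq_last h i hv

theorem IsLoosePath3.not_monochromatic_centreColoring [Fintype V] {k : ℕ}
    {e₁ e₂ e₃ : Finset V} (hP : IsLoosePath3 k e₁ e₂ e₃) (c : Fin m ↪ V)
    (hV : Fintype.card V < m + (3 * k - 2))
    (h₁₂ : centreColoring c e₁ = centreColoring c e₂)
    (h₂₃ : centreColoring c e₂ = centreColoring c e₃) : False := by
  rcases Fin.eq_castSucc_or_eq_last (centreColoring c e₂) with ⟨i, hi⟩ | hlast
  · exact disjoint_left.1 hP.disjoint₁₃ (mem_of_centreColoring_eq_castSucc (h₁₂.trans hi))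
      (mem_of_centreColoring_eq_castSucc (h₂₃.symm.trans hi))
  · have hW := hP.card_le_of_subset
      (subset_compl_of_centreColoring_eq_last (h₁₂.trans hlast))
      (subset_compl_of_centreColoring_eq_last hlast)
      (subset_compl_of_centreColoring_eq_last (h₂₃.symm.trans hlast))
    rw [card_compl, card_map, card_univ, Fintype.card_fin] at hW
    have := Fintype.card_fin m ▸ Fintype.card_le_of_embedding c
    omega

end CentreColoring

/-- For every k ≥ 3 and r ≥ 1 there is an r-coloring of the edges
(k-element subsets) of the complete k-uniform hypergraph on r + 3k − 4 vertices
with no monochromatic loose k-path of length three; equivalently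
R(P^{(k)}; r) ≥ r + 3k − 3. -/
theorem multicolor_ramsey_loose_path_lower_bound :
    ∀ k : ℕ, 3 ≤ k → ∀ r : ℕ, 1 ≤ r →
      ∃ χ : Finset (Fin (r + 3 * k - 4)) → Fin r,
        ¬ ∃ e₁ e₂ e₃ : Finset (Fin (r + 3 * k - 4)),
            e₁.card = k ∧ e₂.card = k ∧ e₃.card = k ∧
            χ e₁ = χ e₂ ∧ χ e₂ = χ e₃ ∧
            (e₁ ∩ e₂).card = 1 ∧ (e₂ ∩ e₃).card = 1 ∧ e₁ ∩ e₃ = ∅ := by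
  intro k hk r hr
  obtain ⟨m, rfl⟩ := Nat.exists_eq_add_of_le' hr
  let c : Fin m ↪ Fin (m + 1 + 3 * k - 4) := Fin.castLEEmb (by omega)
  refine ⟨centreColoring c, ?_⟩
  rintro ⟨e₁, e₂, e₃, h₁, h₂, h₃, h₁₂, h₂₃, h₁₂', h₂₃', h₁₃⟩
  exact IsLoosePath3.not_monochromatic_centreColoring ⟨h₁, h₂, h₃, h₁₂', h₂₃', h₁₃⟩ c
    (by rw [Fintype.card_fin]; omega) h₁₂ h₂₃
end

section
/- Every bipartite graph B with vertex classes V₁ and V₂ and at least one edge contains a nonempty subgraph G such that every vertex v of G lying in V₁ satisfies deg_G(v) ≥ |B|/(2|V₁|) and every vertex v of G lying in V₂ satisfies deg_G(v) ≥ |B|/(2|V₂|). -/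
/-!
Weight a set of edges `H` by `|H| - c₁ |π₁ H| - c₂ |π₂ H|`, where `πᵢ H` is the set of vertices
of `Vᵢ` covered by `H` and `cᵢ = |B| / (2 |Vᵢ|)`. The whole graph has weight at least
`|B| - |B|/2 - |B|/2 = 0`. Deleting a vertex of `V₁` of degree less than `c₁`, together with its
edges, strictly increases the weight (and likewise in `V₂`), so a nonempty subgraph of maximal
weight has no such vertex; the deletion cannot leave the empty graph, whose weight is `0`.
-/

open Finset

section

variable {α β γ : Type*} [DecidableEq β] [DecidableEq γ]

def potential (f : α → β) (g : α → γ) (a b : ℝ) (H : Finset α) : ℝ :=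
  #H - a * #(H.image f) - b * #(H.image g)

@[simp]
lemma potential_empty (f : α → β) (g : α → γ) (a b : ℝ) : potential f g a b ∅ = 0 := by
  simp [potential]

lemma potential_comm (f : α → β) (g : α → γ) (a b : ℝ) (H : Finset α) :
    potential f g a b H = potential g f b a H := by
  unfold potential; ring

lemma card_image_filter_ne_add_one (f : α → β) {H : Finset α} {v : β} (hv : v ∈ H.image f) :
    #((H.filter (f · ≠ v)).image f) + 1 = #(H.image f) := by
  rw [← card_erase_add_one hv, ← filter_ne', filter_image]

lemma potential_lt_potential_filter_ne (f : α → β) (g : α → γ) {a b : ℝ} (hb : 0 ≤ b)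
    {H : Finset α} {v : β} (hv : v ∈ H.image f) (hdeg : #(H.filter (f · = v)) < a) :
    potential f g a b H < potential f g a b (H.filter (f · ≠ v)) := by
  have hcard : (#(H.filter (f · = v)) : ℝ) + #(H.filter (f · ≠ v)) = #H := by
    exact_mod_cast card_filter_add_card_filter_not _
  have hf : (#((H.filter (f · ≠ v)).image f) : ℝ) + 1 = #(H.image f) := by
    exact_mod_cast card_image_filter_ne_add_one f hv
  have hg : (#((H.filter (f · ≠ v)).image g) : ℝ) ≤ #(H.image g) := by
    exact_mod_cast card_le_card (image_subset_image (filter_subset _ H))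
  unfold potential
  nlinarith [mul_le_mul_of_nonneg_left hg hb]

theorem exists_subset_forall_card_fiber_ge (f : α → β) (g : α → γ) {a b : ℝ}
    (ha : 0 ≤ a) (hb : 0 ≤ b) {B : Finset α} (hne : B.Nonempty)
    (hB : 0 ≤ potential f g a b B) :
    ∃ G ⊆ B, G.Nonempty ∧
      (∀ v ∈ G.image f, a ≤ #(G.filter (f · = v))) ∧
      (∀ w ∈ G.image g, b ≤ #(G.filter (g · = w))) := by
  obtain ⟨G, hG, hGmax⟩ := (B.powerset.filter Finset.Nonempty).exists_max_image
    (potential f g a b) ⟨B, mem_filter.mpr ⟨mem_powerset_self B, hne⟩⟩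
  rw [mem_filter, mem_powerset] at hG
  have hGnonneg : 0 ≤ potential f g a b G :=
    hB.trans (hGmax B (mem_filter.mpr ⟨mem_powerset_self B, hne⟩))
  -- `G` has nonnegative weight and `∅` weight `0`, so anything heavier competes with `G`.
  have not_lt (G' : Finset α) (hG' : G' ⊆ G) : ¬ potential f g a b G < potential f g a b G' := by
    intro hlt
    have hG'ne : G'.Nonempty := by
      rw [nonempty_iff_ne_empty]
      rintro rfl
      simp only [potential_empty] at hlt
      linarith
    exact (hGmax G' (mem_filter.mpr ⟨mem_powerset.mpr (hG'.trans hG.1), hG'ne⟩)).not_gt hlt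
  refine ⟨G, hG.1, hG.2, fun v hv => ?_, fun w hw => ?_⟩
  · by_contra! hdeg
    exact not_lt _ (filter_subset _ G) (potential_lt_potential_filter_ne f g hb hv hdeg)
  · by_contra! hdeg
    simp only [potential_comm f g a b] at not_lt
    exact not_lt _ (filter_subset _ G) (potential_lt_potential_filter_ne g f ha hw hdeg)

end

lemma div_two_mul_mul_le {x n k : ℝ} (hx : 0 ≤ x) (hk : 0 ≤ k) (hkn : k ≤ n) :
    x / (2 * n) * k ≤ x / 2 := by
  rcases (hk.trans hkn).eq_or_lt with rfl | hn
  · simp only [mul_zero, div_zero, zero_mul]; positivity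
  · calc x / (2 * n) * k ≤ x / (2 * n) * n := by gcongr
      _ = x / 2 := by field_simp

theorem exists_bipartite_subgraph_min_degree_general {V₁ V₂ : Type*}
    [Fintype V₁] [Fintype V₂] [DecidableEq V₁] [DecidableEq V₂]
    (B : Finset (V₁ × V₂)) (hne : B.Nonempty) :
    ∃ G ⊆ B, G.Nonempty ∧
      (∀ v : V₁, (∃ p ∈ G, p.1 = v) →
        ((G.filter (fun p => p.1 = v)).card : ℝ) ≥
          (B.card : ℝ) / (2 * (Fintype.card V₁ : ℝ))) ∧
      (∀ w : V₂, (∃ p ∈ G, p.2 = w) →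
        ((G.filter (fun p => p.2 = w)).card : ℝ) ≥
          (B.card : ℝ) / (2 * (Fintype.card V₂ : ℝ))) := by
  have hB : 0 ≤ potential Prod.fst Prod.snd (#B / (2 * Fintype.card V₁))
      (#B / (2 * Fintype.card V₂)) B := by
    have h₁ := div_two_mul_mul_le (#B).cast_nonneg (#(B.image Prod.fst)).cast_nonneg
      (Nat.cast_le.mpr (card_le_univ (B.image Prod.fst)))
    have h₂ := div_two_mul_mul_le (#B).cast_nonneg (#(B.image Prod.snd)).cast_nonneg
      (Nat.cast_le.mpr (card_le_univ (B.image Prod.snd)))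
    unfold potential
    linarith
  obtain ⟨G, hGB, hGne, h₁, h₂⟩ :=
    exists_subset_forall_card_fiber_ge Prod.fst Prod.snd (by positivity) (by positivity) hne hB
  exact ⟨G, hGB, hGne, fun v hv => h₁ v (mem_image.mpr hv), fun w hw => h₂ w (mem_image.mpr hw)⟩

/-- Every bipartite graph B with vertex classes V₁ and V₂ (modelled as a
set of edges between V₁ and V₂) having at least one edge contains a nonempty subgraph G
such that every vertex of G lying in V₁ has degree in G at least |B|/(2|V₁|) and every
vertex of G lying in V₂ has degree in G at least |B|/(2|V₂|). -/
theorem exists_bipartite_subgraph_min_degree {V₁ V₂ : Type*}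
    [Fintype V₁] [Fintype V₂] [DecidableEq V₁] [DecidableEq V₂]
    [Nonempty V₁] [Nonempty V₂]
    (B : Finset (V₁ × V₂)) (hne : B.Nonempty) :
    ∃ G ⊆ B, G.Nonempty ∧
      (∀ v : V₁, (∃ p ∈ G, p.1 = v) →
        ((G.filter (fun p => p.1 = v)).card : ℝ) ≥
          (B.card : ℝ) / (2 * (Fintype.card V₁ : ℝ))) ∧
      (∀ w : V₂, (∃ p ∈ G, p.2 = w) →
        ((G.filter (fun p => p.2 = w)).card : ℝ) ≥
          (B.card : ℝ) / (2 * (Fintype.card V₂ : ℝ))) :=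
  exists_bipartite_subgraph_min_degree_general B hne
end

section
/- For all k ≥ 3 and b > 0 there exists n₀ such that for all n ≥ n₀ the following holds. Let H be a P^{(k)}-free k-uniform hypergraph on n vertices, let v be a vertex with deg_H(v) ≥ b·C(n−1, k−1), and let F be a sub-hypergraph of the link H(v) such that every vertex of V(F) has degree in F at least (b/(k−1)) · C(n−2, k−2). Then for every edge e of H, either v ∈ e or e ∩ V(F) = ∅. -/
/-!
Suppose an edge `e ∌ v` meets `V(F)` in `w`. In a uniform family, the sets through two fixed
vertices number at most `C(n - 2, ·)`. Hence the large `F`-degree of `w` gives `f ∈ F` with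
`f ∩ e = {w}`, and then the large degree of `v` gives an edge `g ∋ v` avoiding `e ∪ f`. Now
`g, f ∪ {v}, e` is a loose path of length three. With `n₀ = k + ⌈k³ / b⌉` both degree bounds
beat the corresponding pair counts.
-/

open Finset

section Counting

variable {α : Type*} [Fintype α] [DecidableEq α]

theorem card_filter_superset_le_choose {A : Finset (Finset α)} {m : ℕ}
    (hA : ∀ a ∈ A, #a = m) (t : Finset α) :
    #(A.filter (t ⊆ ·)) ≤ (Fintype.card α - #t).choose (m - #t) := by
  calc #(A.filter (t ⊆ ·)) ≤ #(powersetCard (m - #t) (univ \ t)) := by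
        refine card_le_card_of_injOn (· \ t) (fun a ha => ?_) (fun a ha a' ha' h => ?_)
        · rw [mem_coe, mem_filter] at ha
          rw [mem_coe, mem_powersetCard]
          exact ⟨sdiff_subset_sdiff (subset_univ a) le_rfl,
            by rw [card_sdiff_of_subset ha.2, hA a ha.1]⟩
        · rw [mem_coe, mem_filter] at ha ha'
          rw [← sdiff_union_of_subset ha.2, ← sdiff_union_of_subset ha'.2]
          exact congrArg (· ∪ t) h
    _ = (Fintype.card α - #t).choose (m - #t) := by
        rw [card_powersetCard, card_sdiff_of_subset (subset_univ t), card_univ]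

theorem exists_mem_disjoint_of_card_lt {A : Finset (Finset α)} {m : ℕ}
    (hA : ∀ a ∈ A, #a = m) {x : α} {S : Finset α} (hxS : x ∉ S)
    (hcard : #S * (Fintype.card α - 2).choose (m - 2) < #(A.filter (x ∈ ·))) :
    ∃ a ∈ A, x ∈ a ∧ Disjoint a S := by
  by_contra! hmeet
  have hcover : A.filter (x ∈ ·) ⊆ S.biUnion fun u => A.filter ({x, u} ⊆ ·) := by
    intro a ha
    obtain ⟨haA, hxa⟩ := mem_filter.1 ha
    obtain ⟨u, hua, huS⟩ := not_disjoint_iff.1 (hmeet a haA hxa)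
    exact mem_biUnion.2 ⟨u, huS, mem_filter.2 ⟨haA, insert_subset hxa (singleton_subset_iff.2 hua)⟩⟩
  refine (card_le_card hcover |>.trans (card_biUnion_le.trans ?_)).not_gt hcard
  rw [← smul_eq_mul, ← sum_const]
  refine sum_le_sum fun u hu => ?_
  have hxu : x ≠ u := fun h => hxS (h ▸ hu)
  simpa only [card_pair hxu] using card_filter_superset_le_choose hA {x, u}

end Counting

section LoosePath

variable {α : Type*} [DecidableEq α]

def IsLoosePath (e₁ e₂ e₃ : Finset α) : Prop :=
  #(e₁ ∩ e₂) = 1 ∧ #(e₂ ∩ e₃) = 1 ∧ e₁ ∩ e₃ = ∅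

theorem inter_eq_singleton_of_disjoint_erase {f e : Finset α} {w : α}
    (hwf : w ∈ f) (hwe : w ∈ e) (h : Disjoint f (e.erase w)) : f ∩ e = {w} := by
  ext x
  simp only [mem_inter, mem_singleton]
  refine ⟨fun ⟨hxf, hxe⟩ => ?_, fun hx => hx ▸ ⟨hwf, hwe⟩⟩
  by_contra hxw
  exact disjoint_left.1 h hxf (mem_erase.2 ⟨hxw, hxe⟩)

theorem isLoosePath_insert {g f e : Finset α} {v w : α}
    (hvg : v ∈ g) (hve : v ∉ e) (hg : Disjoint g (e ∪ f)) (hfe : f ∩ e = {w}) :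
    IsLoosePath g (insert v f) e := by
  rw [disjoint_union_right] at hg
  refine ⟨?_, ?_, disjoint_iff_inter_eq_empty.1 hg.1⟩
  · rw [inter_insert_of_mem hvg, disjoint_iff_inter_eq_empty.1 hg.2, insert_empty, card_singleton]
  · rw [insert_inter_of_notMem hve, hfe, card_singleton]

end LoosePath

theorem choose_sub_three_mul_eq {n k : ℕ} (hk : 3 ≤ k) (hkn : k ≤ n) :
    (n - 2).choose (k - 3) * (n + 1 - k) = (n - 2).choose (k - 2) * (k - 2) := by
  have := Nat.choose_succ_right_eq (n - 2) (k - 3)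
  rw [show k - 3 + 1 = k - 2 by omega, show n - 2 - (k - 3) = n + 1 - k by omega] at this
  exact this.symm

theorem choose_sub_one_mul_eq {n k : ℕ} (hk : 2 ≤ k) (hkn : k ≤ n) :
    (n - 1).choose (k - 1) * (k - 1) = (n - 1) * (n - 2).choose (k - 2) := by
  have := Nat.add_one_mul_choose_eq (n - 2) (k - 2)
  rw [show n - 2 + 1 = n - 1 by omega, show k - 2 + 1 = k - 1 by omega] at this
  exact this.symm

theorem sub_one_mul_choose_sub_three_lt {n k : ℕ} {b : ℝ} (hk : 3 ≤ k) (hkn : k ≤ n)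
    (hlarge : (k : ℝ) ^ 3 < b * (n + 1 - k)) :
    (((k - 1) * (n - 2).choose (k - 3) : ℕ) : ℝ) < b / (k - 1) * (n - 2).choose (k - 2) := by
  have hid := congrArg (Nat.cast : ℕ → ℝ) (choose_sub_three_mul_eq hk hkn)
  have hc : (0 : ℝ) < (n - 2).choose (k - 2) := by exact_mod_cast Nat.choose_pos (by omega)
  have hk' : (3 : ℝ) ≤ k := by exact_mod_cast hk
  have hN : (0 : ℝ) < n + 1 - k := by
    have : (k : ℝ) ≤ n := by exact_mod_cast hkn
    linarith
  push_cast [Nat.cast_sub (by omega : 3 ≤ k), Nat.cast_sub (by omega : 2 ≤ k),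
    Nat.cast_sub (by omega : 1 ≤ k), Nat.cast_sub (by omega : k ≤ n + 1)] at hid ⊢
  rw [div_mul_eq_mul_div, lt_div_iff₀ (by linarith), ← mul_lt_mul_iff_left₀ hN]
  calc (k - 1 : ℝ) * (n - 2).choose (k - 3) * (k - 1) * (n + 1 - k)
      = (k - 1) ^ 2 * (k - 2) * (n - 2).choose (k - 2) := by
        linear_combination (k - 1 : ℝ) ^ 2 * hid
    _ < k ^ 3 * (n - 2).choose (k - 2) := by gcongr; nlinarith
    _ < b * (n + 1 - k) * (n - 2).choose (k - 2) := by gcongr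
    _ = b * (n - 2).choose (k - 2) * (n + 1 - k) := by ring

theorem two_mul_sub_one_mul_choose_sub_two_lt {n k : ℕ} {b : ℝ} (hk : 3 ≤ k) (hkn : k ≤ n)
    (hb : 0 < b) (hlarge : (k : ℝ) ^ 3 < b * (n + 1 - k)) :
    (((2 * k - 1) * (n - 2).choose (k - 2) : ℕ) : ℝ) < b * (n - 1).choose (k - 1) := by
  have hid := congrArg (Nat.cast : ℕ → ℝ) (choose_sub_one_mul_eq (by omega : 2 ≤ k) hkn)
  have hc : (0 : ℝ) < (n - 2).choose (k - 2) := by exact_mod_cast Nat.choose_pos (by omega)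
  have hk' : (3 : ℝ) ≤ k := by exact_mod_cast hk
  push_cast [Nat.cast_sub (by omega : 1 ≤ 2 * k), Nat.cast_sub (by omega : 1 ≤ k),
    Nat.cast_sub (by omega : 1 ≤ n)] at hid ⊢
  rw [← mul_lt_mul_iff_left₀ (by linarith : (0 : ℝ) < k - 1)]
  calc (2 * k - 1 : ℝ) * (n - 2).choose (k - 2) * (k - 1)
      = (2 * k - 1) * (k - 1) * (n - 2).choose (k - 2) := by ring
    _ < k ^ 3 * (n - 2).choose (k - 2) := by gcongr; nlinarith [sq_nonneg (k : ℝ)]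
    _ < b * (n + 1 - k) * (n - 2).choose (k - 2) := by gcongr
    _ ≤ b * (n - 1) * (n - 2).choose (k - 2) := by gcongr b * ?_ * _; linarith
    _ = b * (n - 1).choose (k - 1) * (k - 1) := by linear_combination b * hid.symm

theorem lt_mul_add_one_sub_of_add_ceil_div_le {x b : ℝ} {k n : ℕ} (hb : 0 < b)
    (hn : k + ⌈x / b⌉₊ ≤ n) : x < b * (n + 1 - k) := by
  have hceil : x / b ≤ n - k := by
    have : ((k + ⌈x / b⌉₊ : ℕ) : ℝ) ≤ n := mod_cast hn
    push_cast at this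
    linarith [Nat.le_ceil (x / b)]
  rw [div_le_iff₀' hb] at hceil
  linarith [show b * (n + 1 - k) = b * (n - k) + b by ring]

/-- For all k ≥ 3 and b > 0 there exists n₀ such that for all n ≥ n₀:
let H be a P^{(k)}-free k-uniform hypergraph on n vertices, v a vertex with
deg_H(v) ≥ b·C(n−1, k−1), and F a sub-hypergraph of the link H(v) (each edge f of F
satisfies v ∉ f and {v} ∪ f ∈ H) in which every covered vertex has degree at least
(b/(k−1)) · C(n−2, k−2). Then every edge e of H satisfies v ∈ e or e ∩ V(F) = ∅. -/
theorem loose_path_free_edges_avoid_link_core :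
    ∀ k : ℕ, 3 ≤ k → ∀ b : ℝ, 0 < b → ∃ n₀ : ℕ, ∀ n : ℕ, n₀ ≤ n →
      ∀ H : Finset (Finset (Fin n)),
        (∀ e ∈ H, e.card = k) →
        (¬ ∃ e₁ ∈ H, ∃ e₂ ∈ H, ∃ e₃ ∈ H,
            (e₁ ∩ e₂).card = 1 ∧ (e₂ ∩ e₃).card = 1 ∧ e₁ ∩ e₃ = ∅) →
        ∀ v : Fin n,
          ((H.filter (fun e => v ∈ e)).card : ℝ) ≥
            b * (Nat.choose (n - 1) (k - 1) : ℝ) →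
          ∀ F : Finset (Finset (Fin n)),
            (∀ f ∈ F, v ∉ f ∧ insert v f ∈ H) →
            (∀ w ∈ F.biUnion id,
              ((F.filter (fun f => w ∈ f)).card : ℝ) ≥
                b / ((k : ℝ) - 1) * (Nat.choose (n - 2) (k - 2) : ℝ)) →
            ∀ e ∈ H, v ∈ e ∨ e ∩ F.biUnion id = ∅ := by
  intro k hk b hb
  refine ⟨k + ⌈(k : ℝ) ^ 3 / b⌉₊, fun n hn H hH hfree v hv F hF hFdeg e he => ?_⟩
  have hkn : k ≤ n := by omega
  have hlarge := lt_mul_add_one_sub_of_add_ceil_div_le (x := (k : ℝ) ^ 3) hb hn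
  have hFcard : ∀ f ∈ F, #f = k - 1 := fun f hf => by
    have := hH _ (hF f hf).2
    rw [card_insert_of_notMem (hF f hf).1] at this
    omega
  by_contra! ⟨hve, hmeet⟩
  obtain ⟨w, hw⟩ := hmeet
  obtain ⟨hwe, hwF⟩ := mem_inter.1 hw
  obtain ⟨f, hfF, hwf, hfe⟩ := exists_mem_disjoint_of_card_lt hFcard (notMem_erase w e) (by
    rw [card_erase_of_mem hwe, hH e he, Fintype.card_fin, show k - 1 - 2 = k - 3 by omega]
    exact_mod_cast (sub_one_mul_choose_sub_three_lt hk hkn hlarge).trans_le (hFdeg w hwF))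
  have hvef : v ∉ e ∪ f := by simp [hve, (hF f hfF).1]
  have hef : #(e ∪ f) ≤ 2 * k - 1 := by
    have := card_union_le e f
    rw [hH e he, hFcard f hfF] at this
    omega
  obtain ⟨g, hgH, hvg, hg⟩ := exists_mem_disjoint_of_card_lt hH hvef (by
    rw [Fintype.card_fin]
    calc #(e ∪ f) * (n - 2).choose (k - 2) ≤ (2 * k - 1) * (n - 2).choose (k - 2) := by gcongr
      _ < #(H.filter (v ∈ ·)) := by
        exact_mod_cast (two_mul_sub_one_mul_choose_sub_two_lt hk hkn hb hlarge).trans_le hv)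
  exact hfree ⟨g, hgH, insert v f, (hF f hfF).2, e, he,
    isLoosePath_insert hvg hve hg (inter_eq_singleton_of_disjoint_erase hwf hwe hfe)⟩
end

section
/- For all k ≥ 250 there exists n₀ such that for all n ≥ n₀ the following holds. If C₁, C₂, C₃ are (k−1)-uniform hypergraphs on a common vertex set of at most n vertices, each with at least (0.96^k/(48k)) · C(n−1, k−1) edges, then there exist edges f₁ ∈ C₁, f₂ ∈ C₂, f₃ ∈ C₃ forming a loose (k−1)-path of length three, i.e., after a suitable relabeling of the three sets as g₁, g₂, g₃ one has |g₁∩g₂| = |g₂∩g₃| = 1 and g₁∩g₃ = ∅. -/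
/-!
Let `ε = 0.96^k / (48k)`, `j = k - 1` and `δ = ε·C(n-1, j) / (2n)`. In each colour the edges
through vertices of degree `< δ` number at most `nδ`, so at least `ε·C(n-1, j)/2` edges lie inside
the set of vertices of degree `≥ δ`; comparing `C(w, j)` with `C(n-1, j)` and using
`0.91^j < ε/2` shows that this set has more than `10n/11` vertices. Let `H` be the vertices of
degree `≥ δ` in all three colours, so `|Hᶜ| < 3n/11`.

Take `x ∈ H` and `f₁ ∈ C₁` through `x`. Edges of `C₂` through `x` meeting `f₁ \ {x}` number at
most `j·C(n, j-2)` (a codegree bound), and those inside `{x} ∪ Hᶜ ∪ f₁` at most `C(n/3, j-1)`.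
The first is negligible against `δ` for large `n`, the second because
`(2/3)^k·poly(k) ≪ 0.96^k / k` once `k ≥ 250`. Hence some `f₂ ∋ x` meets `f₁` only in `x` and
contains a vertex `y ∈ H \ f₁`; in the same way some `f₃ ∋ y` avoids `(f₁ ∪ f₂) \ {y}`.
-/

section BinomialEstimates

open Nat

theorem mul_pow_le_pow_of_le {a r : ℝ} {p k₀ k : ℕ} (hk₀ : 0 < k₀) (ha : 0 ≤ a)
    (hr : (1 + 1 / k₀ : ℝ) ^ p ≤ r) (h₀ : a * k₀ ^ p ≤ r ^ k₀) (hk : k₀ ≤ k) :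
    a * k ^ p ≤ r ^ k := by
  induction k, hk using Nat.le_induction with
  | base => exact h₀
  | succ k hk ih =>
    have hk₀' : (0 : ℝ) < k₀ := by exact_mod_cast hk₀
    have hsucc : ((k + 1 : ℕ) : ℝ) ≤ k * (1 + 1 / k₀) := by
      rw [mul_add, mul_one, mul_one_div, cast_succ]
      gcongr
      exact (one_le_div hk₀').2 (by exact_mod_cast hk)
    calc a * ((k + 1 : ℕ) : ℝ) ^ p ≤ a * (k * (1 + 1 / k₀)) ^ p := by gcongr
      _ = a * k ^ p * (1 + 1 / k₀) ^ p := by rw [mul_pow, mul_assoc]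
      _ ≤ r ^ k * r := by
        have : 0 ≤ r := (by positivity : (0 : ℝ) ≤ (1 + 1 / k₀) ^ p).trans hr
        gcongr
      _ = r ^ (k + 1) := (pow_succ r k).symm

theorem pow_lt_density_half {j : ℕ} (hj : 249 ≤ j) :
    (0.91 : ℝ) ^ j < 0.96 ^ (j + 1) / (48 * (j + 1)) / 2 := by
  have hpoly : 106 * ((j + 1 : ℕ) : ℝ) ^ 1 ≤ (96 / 91) ^ (j + 1) :=
    mul_pow_le_pow_of_le (k₀ := 250) (by norm_num) (by norm_num) (by norm_num) (by norm_num)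
      (by omega)
  have h := mul_le_mul_of_nonneg_right hpoly (by positivity : (0 : ℝ) ≤ 0.91 ^ (j + 1))
  rw [← mul_pow, pow_succ _ j] at h
  rw [div_div, lt_div_iff₀ (by positivity)]
  push_cast at h
  norm_num at h ⊢
  nlinarith [pow_pos (by norm_num : (0 : ℝ) < 91 / 100) j]

theorem mul_pow_le_density_half {j : ℕ} (hj : 249 ≤ j) :
    9 * j * (2 / 3 : ℝ) ^ (j + 1) ≤ 0.96 ^ (j + 1) / (48 * (j + 1)) / 2 := by
  have hpoly : 1728 * ((j + 1 : ℕ) : ℝ) ^ 2 ≤ 1.44 ^ (j + 1) :=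
    mul_pow_le_pow_of_le (k₀ := 250) (by norm_num) (by norm_num) (by norm_num) (by norm_num)
      (by omega)
  have h := mul_le_mul_of_nonneg_right hpoly (by positivity : (0 : ℝ) ≤ (2 / 3) ^ (j + 1))
  rw [mul_assoc, ← mul_pow] at h
  rw [div_div, le_div_iff₀ (by positivity)]
  push_cast at h
  norm_num at h ⊢
  nlinarith [pow_pos (by norm_num : (0 : ℝ) < 2 / 3) (j + 1)]

theorem choose_le_pow_mul_choose {w N j : ℕ} {r : ℝ} (hr : 0 ≤ r)
    (hw : (w : ℝ) ≤ r * (N + 1 - j : ℕ)) : (w.choose j : ℝ) ≤ r ^ j * N.choose j :=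
  calc (w.choose j : ℝ) ≤ w ^ j / j ! := choose_le_pow_div j w
    _ ≤ (r * (N + 1 - j : ℕ)) ^ j / j ! := by gcongr
    _ = r ^ j * ((N + 1 - j : ℕ) ^ j / j !) := by rw [mul_pow, mul_div_assoc]
    _ ≤ r ^ j * N.choose j := by gcongr; exact pow_le_choose j N

theorem lt_of_mul_choose_le_choose {j n w : ℕ} {ε : ℝ} (hj : 0 < j) (hn : 1001 * j ≤ n)
    (hε : 0.91 ^ j < ε / 2) (h : ε / 2 * (n - 1).choose j ≤ w.choose j) :
    10 * n / 11 < (w : ℝ) := by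
  by_contra! hw
  have hL : (0 : ℝ) < (n - 1).choose j := by exact_mod_cast choose_pos (by omega)
  have hw' : (w : ℝ) ≤ 0.91 * (n - 1 + 1 - j : ℕ) := by
    rw [show n - 1 + 1 - j = n - j by omega, cast_sub (by omega)]
    have : (1001 * j : ℝ) ≤ n := by exact_mod_cast hn
    linarith
  nlinarith [choose_le_pow_mul_choose (by norm_num) hw']

theorem half_pow_div_factorial_le_choose {n j : ℕ} (hn : 2 * j ≤ n) :
    (n / 2 : ℝ) ^ j / j ! ≤ (n - 1).choose j := by
  have hhalf : (n / 2 : ℝ) ≤ (n - 1 + 1 - j : ℕ) :=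
    calc (n / 2 : ℝ) ≤ (n - j : ℕ) := by
          rw [cast_sub (by omega)]
          have : (2 * j : ℝ) ≤ n := by exact_mod_cast hn
          linarith
      _ ≤ (n - 1 + 1 - j : ℕ) := by gcongr; omega
  calc (n / 2 : ℝ) ^ j / j ! ≤ (n - 1 + 1 - j : ℕ) ^ j / j ! := by gcongr
    _ ≤ (n - 1).choose j := pow_le_choose _ _

theorem two_mul_pow_div_factorial_add_lt {i : ℕ} {n ε : ℝ} (hn : 0 < n)
    (hε : 9 * (i + 2) * (2 / 3 : ℝ) ^ (i + 3) ≤ ε / 2)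
    (hεn : 4 * (i + 3 : ℝ) ^ 3 * 2 ^ (i + 3) < ε * n) :
    2 * (i + 2) * (n ^ i / i !) + (n / 3) ^ (i + 1) / (i + 1)! <
      ε / (2 * n) * ((n / 2) ^ (i + 2) / (i + 2)!) := by
  set t : ℝ := n ^ i / i ! with ht
  have hthird : (n / 3) ^ (i + 1) / (i + 1)! = t * (n / (3 ^ (i + 1) * (i + 1))) := by
    rw [factorial_succ, ht, div_pow]; push_cast; field_simp; ring
  have hhalf :
      (n / 2) ^ (i + 2) / (i + 2)! = t * (n ^ 2 / (2 ^ (i + 2) * ((i + 1) * (i + 2)))) := by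
    rw [factorial_succ, factorial_succ, ht, div_pow]; push_cast; field_simp; ring
  have hD : (0 : ℝ) < 2 ^ (i + 3) * (i + 1) * (i + 2) := by positivity
  have hscalar : 2 * (i + 2) + n / (3 ^ (i + 1) * (i + 1)) <
      ε / (2 * n) * (n ^ 2 / (2 ^ (i + 2) * ((i + 1) * (i + 2)))) := by
    have hrhs : ε / (2 * n) * (n ^ 2 / (2 ^ (i + 2) * ((i + 1) * (i + 2)))) =
        ε * n / (2 ^ (i + 3) * (i + 1) * (i + 2)) := by
      field_simp; ring
    have hlink : n / (3 ^ (i + 1) * (i + 1)) * (2 ^ (i + 3) * (i + 1) * (i + 2)) =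
        n * (9 * (i + 2) * (2 / 3) ^ (i + 3)) := by
      rw [div_pow]; field_simp; ring
    have hcodeg : 2 * (i + 2) * (2 ^ (i + 3) * (i + 1) * (i + 2)) ≤
        4 * ((i : ℝ) + 3) ^ 3 * 2 ^ (i + 3) / 2 := by
      have : (0 : ℝ) ≤ i := cast_nonneg i
      have : (0 : ℝ) < 2 ^ (i + 3) := by positivity
      nlinarith
    rw [hrhs, lt_div_iff₀ hD, add_mul, hlink]
    nlinarith [mul_le_mul_of_nonneg_left hε hn.le]
  rw [hthird, hhalf]
  have ht0 : 0 < t := by positivity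
  calc 2 * (i + 2) * t + t * (n / (3 ^ (i + 1) * (i + 1)))
      = t * (2 * (i + 2) + n / (3 ^ (i + 1) * (i + 1))) := by ring
    _ < t * (ε / (2 * n) * (n ^ 2 / (2 ^ (i + 2) * ((i + 1) * (i + 2))))) := by gcongr
    _ = ε / (2 * n) * (t * (n ^ 2 / (2 ^ (i + 2) * ((i + 1) * (i + 2))))) := by ring

theorem mul_choose_add_choose_lt {j n s : ℕ} {ε : ℝ} (hj : 2 ≤ j) (hn : 2 * j ≤ n)
    (hs : 3 * s ≤ n) (hε : 9 * j * (2 / 3 : ℝ) ^ (j + 1) ≤ ε / 2)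
    (hεn : 4 * (j + 1 : ℝ) ^ 3 * 2 ^ (j + 1) < ε * n) :
    ((2 * j * n.choose (j - 2) + s.choose (j - 1) : ℕ) : ℝ) < ε * (n - 1).choose j / (2 * n) := by
  obtain ⟨i, rfl⟩ : ∃ i, j = i + 2 := ⟨j - 2, by omega⟩
  simp only [Nat.add_sub_cancel, show i + 2 - 1 = i + 1 by omega]
  push_cast at hε hεn ⊢
  have hn0 : (0 : ℝ) < n := by exact_mod_cast (show 0 < n by omega)
  have hε0 : 0 < ε := by
    have : (0 : ℝ) < 4 * ((i : ℝ) + 2 + 1) ^ 3 * 2 ^ (i + 2 + 1) := by positivity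
    exact pos_of_mul_pos_left (this.trans hεn) hn0.le
  have hs' : (s : ℝ) ≤ n / 3 := by
    rw [le_div_iff₀ (by norm_num)]; exact_mod_cast (by omega : s * 3 ≤ n)
  calc 2 * ((i : ℝ) + 2) * n.choose i + s.choose (i + 1)
      ≤ 2 * (i + 2) * (n ^ i / i !) + (n / 3) ^ (i + 1) / (i + 1)! := by
        gcongr
        · exact choose_le_pow_div i n
        · exact (choose_le_pow_div _ _).trans (by gcongr)
    _ < ε / (2 * n) * ((n / 2) ^ (i + 2) / (i + 2)!) :=
        two_mul_pow_div_factorial_add_lt hn0 (by simpa [add_assoc] using hε)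
          (by norm_num [add_assoc] at hεn; exact hεn)
    _ ≤ ε / (2 * n) * (n - 1).choose (i + 2) := by gcongr; exact half_pow_div_factorial_le_choose hn
    _ = ε * (n - 1).choose (i + 2) / (2 * n) := by ring

end BinomialEstimates

open Finset

section FiniteFamilies

variable {V : Type*} [DecidableEq V] {C : Finset (Finset V)} {j : ℕ}

def vertexDegree (C : Finset (Finset V)) (x : V) : ℕ := #{f ∈ C | x ∈ f}

theorem card_filter_subset_subset_le_choose (hC : ∀ f ∈ C, #f = j) {A U : Finset V}
    (hAU : A ⊆ U) : #{f ∈ C | A ⊆ f ∧ f ⊆ U} ≤ (#U - #A).choose (j - #A) := by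
  rw [← card_sdiff_of_subset hAU, ← card_powersetCard]
  refine card_le_card_of_injOn (· \ A) (fun f hf => ?_) (fun f hf g hg hfg => ?_)
  · simp only [coe_filter, Set.mem_ofPred_eq] at hf
    rw [mem_coe, mem_powersetCard, card_sdiff_of_subset hf.2.1, hC f hf.1]
    exact ⟨sdiff_subset_sdiff hf.2.2 le_rfl, rfl⟩
  · simp only [coe_filter, Set.mem_ofPred_eq] at hf hg
    simpa [sdiff_union_of_subset hf.2.1, sdiff_union_of_subset hg.2.1] using
      congrArg (· ∪ A) hfg

theorem card_filter_mem_subset_insert_le_choose (hC : ∀ f ∈ C, #f = j) {x : V} {S : Finset V}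
    (hxS : x ∉ S) : #{f ∈ C | x ∈ f ∧ f ⊆ insert x S} ≤ (#S).choose (j - 1) := by
  have h := card_filter_subset_subset_le_choose hC (singleton_subset_iff.2 (mem_insert_self x S))
  simpa [card_insert_of_notMem hxS] using h

theorem inter_eq_singleton_of_disjoint_erase_s15 {s t : Finset V} {x : V} (hs : x ∈ s) (ht : x ∈ t)
    (h : Disjoint t (s.erase x)) : s ∩ t = {x} := by
  refine eq_singleton_iff_unique_mem.2 ⟨mem_inter.2 ⟨hs, ht⟩, fun z hz => ?_⟩
  by_contra hzx
  exact disjoint_left.1 h (mem_inter.1 hz).2 (mem_erase.2 ⟨hzx, (mem_inter.1 hz).1⟩)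

variable [Fintype V]

theorem card_filter_mem_mem_le_choose (hC : ∀ f ∈ C, #f = j) {x z : V} (hxz : x ≠ z) :
    #{f ∈ C | x ∈ f ∧ z ∈ f} ≤ (Fintype.card V).choose (j - 2) := by
  have h := card_filter_subset_subset_le_choose hC (subset_univ {x, z})
  simp only [subset_univ, and_true, insert_subset_iff, singleton_subset_iff,
    card_pair hxz, card_univ] at h
  exact h.trans (Nat.choose_le_choose _ (Nat.sub_le _ _))

theorem card_filter_mem_not_disjoint_le (hC : ∀ f ∈ C, #f = j) {x : V} {B : Finset V}
    (hxB : x ∉ B) :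
    #{f ∈ C | x ∈ f ∧ ¬Disjoint f B} ≤ #B * (Fintype.card V).choose (j - 2) := by
  refine (card_le_card fun f hf => ?_).trans
    (card_biUnion_le_card_mul B (fun z => {f ∈ C | x ∈ f ∧ z ∈ f}) _
      fun z hz => card_filter_mem_mem_le_choose hC (ne_of_mem_of_not_mem hz hxB).symm)
  rw [mem_filter, not_disjoint_iff] at hf
  obtain ⟨hfC, hxf, z, hzf, hzB⟩ := hf
  exact mem_biUnion.2 ⟨z, hzB, mem_filter.2 ⟨hfC, hxf, hzf⟩⟩

theorem exists_mem_disjoint_not_subset_insert (hC : ∀ f ∈ C, #f = j) {x : V}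
    {B S : Finset V} (hxB : x ∉ B) (hxS : x ∉ S)
    (hdeg : #B * (Fintype.card V).choose (j - 2) + (#S).choose (j - 1) < vertexDegree C x) :
    ∃ f ∈ C, x ∈ f ∧ Disjoint f B ∧ ¬f ⊆ insert x S := by
  have hbad : #({f ∈ C | x ∈ f ∧ ¬Disjoint f B} ∪ {f ∈ C | x ∈ f ∧ f ⊆ insert x S}) <
      #{f ∈ C | x ∈ f} :=
    (card_union_le _ _).trans_lt <| (add_le_add (card_filter_mem_not_disjoint_le hC hxB)
      (card_filter_mem_subset_insert_le_choose hC hxS)).trans_lt hdeg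
  obtain ⟨f, hf, hfbad⟩ := exists_mem_notMem_of_card_lt_card hbad
  rw [mem_filter] at hf
  simp only [mem_union, mem_filter, hf.1, hf.2, true_and, not_or, not_not] at hfbad
  exact ⟨f, hf.1, hf.2, hfbad⟩

theorem exists_loosePath_of_lt_vertexDegree {C₁ C₂ C₃ : Finset (Finset V)}
    (hC₁ : ∀ f ∈ C₁, #f = j) (hC₂ : ∀ f ∈ C₂, #f = j) (hC₃ : ∀ f ∈ C₃, #f = j) {H : Finset V}
    {x : V} (hx₁ : 0 < vertexDegree C₁ x)
    (hx : 2 * j * (Fintype.card V).choose (j - 2) + (#Hᶜ + j).choose (j - 1) < vertexDegree C₂ x)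
    (hH : ∀ y ∈ H,
      2 * j * (Fintype.card V).choose (j - 2) + (#Hᶜ + j).choose (j - 1) < vertexDegree C₃ y) :
    ∃ f₁ ∈ C₁, ∃ f₂ ∈ C₂, ∃ f₃ ∈ C₃, #(f₁ ∩ f₂) = 1 ∧ #(f₂ ∩ f₃) = 1 ∧ f₁ ∩ f₃ = ∅ := by
  obtain ⟨f₁, hf₁⟩ := card_pos.1 hx₁
  obtain ⟨hf₁, hxf₁⟩ := mem_filter.1 hf₁
  have hf₁j := hC₁ f₁ hf₁
  have hbound : ∀ B S : Finset V, #B ≤ 2 * j → #S ≤ #Hᶜ + j →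
      #B * (Fintype.card V).choose (j - 2) + (#S).choose (j - 1) ≤
        2 * j * (Fintype.card V).choose (j - 2) + (#Hᶜ + j).choose (j - 1) :=
    fun B S hB hS => add_le_add (Nat.mul_le_mul_right _ hB) (Nat.choose_le_choose _ hS)
  -- `f₂` must leave `Hᶜ ∪ f₁`, which is where the second joint vertex `y` comes from.
  obtain ⟨f₂, hf₂, hxf₂, hf₂f₁, hf₂S⟩ := exists_mem_disjoint_not_subset_insert hC₂
    (notMem_erase x f₁) (notMem_erase x (Hᶜ ∪ f₁)) <| (hbound _ _
      ((card_erase_le).trans (by omega))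
      ((card_erase_le).trans ((card_union_le _ _).trans (by omega)))).trans_lt hx
  obtain ⟨y, hyf₂, hyS⟩ := not_subset.1 hf₂S
  simp only [mem_insert, mem_erase, mem_union, mem_compl, not_or, not_and, not_not] at hyS
  have hyx : y ≠ x := hyS.1
  have hyH : y ∈ H := (hyS.2 hyx).1
  have hyf₁ : y ∉ f₁ := (hyS.2 hyx).2
  obtain ⟨f₃, hf₃, hyf₃, hf₃f, -⟩ := exists_mem_disjoint_not_subset_insert hC₃
    (notMem_erase y (f₁ ∪ f₂)) (notMem_empty y) <| (hbound _ ∅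
      ((card_erase_le).trans ((card_union_le _ _).trans (by have := hC₂ f₂ hf₂; omega)))
      (by simp)).trans_lt (hH y hyH)
  refine ⟨f₁, hf₁, f₂, hf₂, f₃, hf₃, ?_, ?_, ?_⟩
  · rw [inter_eq_singleton_of_disjoint_erase_s15 hxf₁ hxf₂ hf₂f₁, card_singleton]
  · rw [inter_eq_singleton_of_disjoint_erase_s15 hyf₂ hyf₃
      (hf₃f.mono_right (erase_subset_erase y subset_union_right)), card_singleton]
  · refine disjoint_iff_inter_eq_empty.1 (hf₃f.mono_right fun z hz => ?_).symm
    exact mem_erase.2 ⟨ne_of_mem_of_not_mem hz hyf₁, mem_union_left _ hz⟩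

theorem card_le_choose_card_add_mul (hC : ∀ f ∈ C, #f = j) {δ : ℝ} (hδ : 0 ≤ δ) :
    (#C : ℝ) ≤ (#{x | δ ≤ vertexDegree C x}).choose j + Fintype.card V * δ := by
  set W : Finset V := {x | δ ≤ vertexDegree C x}
  have hcover : C ⊆ {f ∈ C | ∅ ⊆ f ∧ f ⊆ W} ∪ Wᶜ.biUnion fun x => {f ∈ C | x ∈ f} := by
    intro f hf
    by_cases hfW : f ⊆ W
    · exact mem_union_left _ (mem_filter.2 ⟨hf, empty_subset f, hfW⟩)
    · obtain ⟨x, hxf, hxW⟩ := not_subset.1 hfW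
      exact mem_union_right _ (mem_biUnion.2 ⟨x, mem_compl.2 hxW, mem_filter.2 ⟨hf, hxf⟩⟩)
  have hinside : (#{f ∈ C | ∅ ⊆ f ∧ f ⊆ W} : ℝ) ≤ (#W).choose j := by
    exact_mod_cast (card_filter_subset_subset_le_choose hC (empty_subset W)).trans_eq (by simp)
  have hlow : (#(Wᶜ.biUnion fun x => {f ∈ C | x ∈ f}) : ℝ) ≤ Fintype.card V * δ := by
    calc (#(Wᶜ.biUnion fun x => {f ∈ C | x ∈ f}) : ℝ)
        ≤ ∑ x ∈ Wᶜ, (vertexDegree C x : ℝ) := by exact_mod_cast card_biUnion_le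
      _ ≤ #Wᶜ * δ := by
        rw [← nsmul_eq_mul]
        refine sum_le_card_nsmul _ _ _ fun x hx => le_of_lt ?_
        simpa [W] using mem_compl.1 hx
      _ ≤ Fintype.card V * δ := by gcongr; exact_mod_cast card_le_univ _
  calc (#C : ℝ) ≤ #({f ∈ C | ∅ ⊆ f ∧ f ⊆ W} ∪ Wᶜ.biUnion fun x => {f ∈ C | x ∈ f}) := by
        exact_mod_cast card_le_card hcover
    _ ≤ _ := by exact_mod_cast (card_union_le _ _)
    _ ≤ _ := add_le_add hinside hlow

theorem inter_inter_nonempty_and_three_mul_card_compl_le {W₁ W₂ W₃ : Finset V} {n j : ℕ}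
    (hV : Fintype.card V ≤ n) (hn : 33 * j ≤ 2 * n) (h₁ : 10 * n / 11 < (#W₁ : ℝ))
    (h₂ : 10 * n / 11 < (#W₂ : ℝ)) (h₃ : 10 * n / 11 < (#W₃ : ℝ)) :
    (W₁ ∩ W₂ ∩ W₃).Nonempty ∧ 3 * (#(W₁ ∩ W₂ ∩ W₃)ᶜ + j) ≤ n := by
  have hunion : #(W₁ ∩ W₂ ∩ W₃)ᶜ ≤ #W₁ᶜ + #W₂ᶜ + #W₃ᶜ := by
    rw [compl_inter, compl_inter]
    exact (card_union_le _ _).trans (by gcongr; exact card_union_le _ _)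
  have hcount : #(W₁ ∩ W₂ ∩ W₃)ᶜ + (#W₁ + #W₂ + #W₃) ≤ 3 * Fintype.card V := by
    linarith [card_add_card_compl W₁, card_add_card_compl W₂, card_add_card_compl W₃]
  have hcountℝ : (#(W₁ ∩ W₂ ∩ W₃)ᶜ : ℝ) + (#W₁ + #W₂ + #W₃) ≤ 3 * Fintype.card V := by
    exact_mod_cast hcount
  have hVn : (Fintype.card V : ℝ) ≤ n := by exact_mod_cast hV
  have hjn : (33 * j : ℝ) ≤ 2 * n := by exact_mod_cast hn
  refine ⟨?_, by exact_mod_cast (by linarith : (3 * (#(W₁ ∩ W₂ ∩ W₃)ᶜ + j) : ℝ) ≤ n)⟩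
  have hlt : #(W₁ ∩ W₂ ∩ W₃)ᶜ < Fintype.card V := by
    exact_mod_cast (by linarith : (#(W₁ ∩ W₂ ∩ W₃)ᶜ : ℝ) < Fintype.card V)
  rw [← card_pos]
  linarith [card_add_card_compl (W₁ ∩ W₂ ∩ W₃)]

theorem lt_card_filter_le_vertexDegree (hC : ∀ f ∈ C, #f = j) {n : ℕ} {ε : ℝ} (hj : 0 < j)
    (hV : Fintype.card V ≤ n) (hn : 1001 * j ≤ n) (hε : 0.91 ^ j < ε / 2)
    (hCn : ε * (n - 1).choose j ≤ #C) :
    10 * n / 11 < (#{x | ε * (n - 1).choose j / (2 * n) ≤ vertexDegree C x} : ℝ) := by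
  refine lt_of_mul_choose_le_choose hj hn hε ?_
  have hn0 : (0 : ℝ) < n := by exact_mod_cast (show 0 < n by omega)
  have hε0 : 0 < ε := by linarith [pow_pos (by norm_num : (0 : ℝ) < 0.91) j]
  have hVn :
      (Fintype.card V : ℝ) * (ε * (n - 1).choose j / (2 * n)) ≤ ε / 2 * (n - 1).choose j := by
    calc (Fintype.card V : ℝ) * (ε * (n - 1).choose j / (2 * n))
        ≤ n * (ε * (n - 1).choose j / (2 * n)) := by gcongr
      _ = ε / 2 * (n - 1).choose j := by field_simp
  linarith [card_le_choose_card_add_mul hC (δ := ε * (n - 1).choose j / (2 * n)) (by positivity)]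

end FiniteFamilies

/-- For all k ≥ 250 there exists n₀ such that for all n ≥ n₀: if C₁, C₂,
C₃ are (k−1)-uniform hypergraphs on a common vertex set of at most n vertices, each
with at least (0.96^k/(48k)) · C(n−1, k−1) edges, then there exist f₁ ∈ C₁, f₂ ∈ C₂,
f₃ ∈ C₃ forming a loose (k−1)-path of length three: after a suitable relabeling as
g₁, g₂, g₃ (choosing which of the three is the middle edge) one has
|g₁ ∩ g₂| = |g₂ ∩ g₃| = 1 and g₁ ∩ g₃ = ∅. -/
theorem rainbow_loose_path_in_dense_colors :
    ∀ k : ℕ, 250 ≤ k → ∃ n₀ : ℕ, ∀ n : ℕ, n₀ ≤ n →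
      ∀ (V : Type) [Fintype V] [DecidableEq V], Fintype.card V ≤ n →
        ∀ C₁ C₂ C₃ : Finset (Finset V),
          (∀ f ∈ C₁, f.card = k - 1) →
          (∀ f ∈ C₂, f.card = k - 1) →
          (∀ f ∈ C₃, f.card = k - 1) →
          ((C₁.card : ℝ) ≥ 0.96 ^ k / (48 * k) * (Nat.choose (n - 1) (k - 1) : ℝ)) →
          ((C₂.card : ℝ) ≥ 0.96 ^ k / (48 * k) * (Nat.choose (n - 1) (k - 1) : ℝ)) →
          ((C₃.card : ℝ) ≥ 0.96 ^ k / (48 * k) * (Nat.choose (n - 1) (k - 1) : ℝ)) →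
          ∃ f₁ ∈ C₁, ∃ f₂ ∈ C₂, ∃ f₃ ∈ C₃,
            (((f₁ ∩ f₂).card = 1 ∧ (f₂ ∩ f₃).card = 1 ∧ f₁ ∩ f₃ = ∅) ∨
             ((f₂ ∩ f₁).card = 1 ∧ (f₁ ∩ f₃).card = 1 ∧ f₂ ∩ f₃ = ∅) ∨
             ((f₁ ∩ f₃).card = 1 ∧ (f₃ ∩ f₂).card = 1 ∧ f₁ ∩ f₂ = ∅)) := by
  intro k hk
  obtain ⟨j, rfl⟩ : ∃ j, k = j + 1 := ⟨k - 1, by omega⟩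
  have hj : 249 ≤ j := by omega
  set ε : ℝ := 0.96 ^ (j + 1) / (48 * ((j + 1 : ℕ) : ℝ))
  have hε₁ : 0.91 ^ j < ε / 2 := by simpa [ε] using pow_lt_density_half hj
  have hε₂ : 9 * j * (2 / 3 : ℝ) ^ (j + 1) ≤ ε / 2 := by simpa [ε] using mul_pow_le_density_half hj
  have hε₀ : 0 < ε := by positivity
  obtain ⟨N, hN⟩ := exists_nat_gt (4 * (j + 1 : ℝ) ^ 3 * 2 ^ (j + 1) / ε)
  refine ⟨max (1001 * j) N, fun n hn V _ _ hV C₁ C₂ C₃ hC₁ hC₂ hC₃ h₁ h₂ h₃ => ?_⟩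
  simp only [Nat.add_sub_cancel] at hC₁ hC₂ hC₃ h₁ h₂ h₃
  obtain ⟨hn, hnN⟩ := max_le_iff.1 hn
  have hεn : 4 * (j + 1 : ℝ) ^ 3 * 2 ^ (j + 1) < ε * n :=
    (div_lt_iff₀' hε₀).1 (hN.trans_le (by exact_mod_cast hnN))
  set δ := ε * (n - 1).choose j / (2 * n)
  set W : Finset (Finset V) → Finset V := fun C => {x | δ ≤ vertexDegree C x}
  obtain ⟨⟨x, hx⟩, hHc⟩ := inter_inter_nonempty_and_three_mul_card_compl_le (j := j) hV
    (by omega) (lt_card_filter_le_vertexDegree hC₁ (by omega) hV hn hε₁ h₁)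
    (lt_card_filter_le_vertexDegree hC₂ (by omega) hV hn hε₁ h₂)
    (lt_card_filter_le_vertexDegree hC₃ (by omega) hV hn hε₁ h₃)
  set H := W C₁ ∩ W C₂ ∩ W C₃
  have hdeg : ∀ (C : Finset (Finset V)) y, δ ≤ vertexDegree C y →
      2 * j * (Fintype.card V).choose (j - 2) + (#Hᶜ + j).choose (j - 1) < vertexDegree C y := by
    intro C y hy
    have hβ := mul_choose_add_choose_lt (by omega) (by omega) hHc hε₂ hεn
    exact_mod_cast ((Nat.cast_le.2 (by gcongr)).trans_lt hβ).trans_le hy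
  have hH : ∀ y ∈ H, δ ≤ vertexDegree C₁ y ∧ δ ≤ vertexDegree C₂ y ∧ δ ≤ vertexDegree C₃ y := by
    simp [H, W]
  obtain ⟨f₁, hf₁, f₂, hf₂, f₃, hf₃, hpath⟩ := exists_loosePath_of_lt_vertexDegree hC₁ hC₂ hC₃
    (hdeg C₁ x (hH x hx).1).pos (hdeg C₂ x (hH x hx).2.1) fun y hy => hdeg C₃ y (hH y hy).2.2
  exact ⟨f₁, hf₁, f₂, hf₂, f₃, hf₃, Or.inl hpath⟩
end

section
/- For every integer k ≥ 3, (1 − (0.9^k/(k−1))^{1/(k−2)})^{k−1} < 0.96^k. -/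
/-! Writing `k = m + 2`, the base `0.9 ^ (m + 2) / (m + 1)` is at least `0.36 ^ m`, because
`(m + 1) * 0.4 ^ m ≤ 0.8 ^ m ≤ 0.81`. Its `m`-th root is therefore at least `0.36`, so the left side
is at most `0.64 ^ (m + 1)`, and `0.64 < 0.96 ^ 2` gives the strict bound. -/

theorem succ_mul_pow_le_two_mul_pow {r : ℝ} (hr : 0 ≤ r) (n : ℕ) :
    ((n : ℝ) + 1) * r ^ n ≤ (2 * r) ^ n := by
  rw [mul_pow]
  gcongr
  exact_mod_cast Nat.lt_two_pow_self

theorem le_rpow_one_div_of_pow_le {c x : ℝ} {m : ℕ} (hc : 0 ≤ c) (hm : m ≠ 0) (h : c ^ m ≤ x) :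
    c ≤ x ^ (1 / (m : ℝ)) := by
  calc c = (c ^ m) ^ ((m : ℝ)⁻¹) := (Real.pow_rpow_inv_natCast hc hm).symm
    _ ≤ x ^ (1 / (m : ℝ)) := by
      rw [one_div]
      exact Real.rpow_le_rpow (by positivity) h (by positivity)

theorem pow_succ_lt_pow_add_two {a b : ℝ} (ha : 0 ≤ a) (hab : a ≤ b) (hab2 : a < b ^ 2) (n : ℕ) :
    a ^ (n + 1) < b ^ (n + 2) := by
  have hb : 0 < b := by nlinarith
  calc a ^ (n + 1) = a ^ n * a := pow_succ a n
    _ ≤ b ^ n * a := by gcongr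
    _ < b ^ n * b ^ 2 := by gcongr
    _ = b ^ (n + 2) := (pow_add b n 2).symm

theorem pow_le_pow_add_two_div_succ {m : ℕ} (hm : m ≠ 0) :
    (0.36 : ℝ) ^ m ≤ (0.9 : ℝ) ^ (m + 2) / ((m : ℝ) + 1) := by
  have hweight : ((m : ℝ) + 1) * (0.4 : ℝ) ^ m ≤ 0.81 :=
    calc ((m : ℝ) + 1) * (0.4 : ℝ) ^ m ≤ (2 * 0.4 : ℝ) ^ m := succ_mul_pow_le_two_mul_pow (by norm_num) m
      _ ≤ 2 * 0.4 := pow_le_of_le_one (by norm_num) (by norm_num) hm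
      _ ≤ 0.81 := by norm_num
  rw [le_div_iff₀ (by positivity)]
  calc (0.36 : ℝ) ^ m * ((m : ℝ) + 1) = (0.9 : ℝ) ^ m * (((m : ℝ) + 1) * (0.4 : ℝ) ^ m) := by
        rw [show (0.36 : ℝ) = 0.9 * 0.4 by norm_num, mul_pow]; ring
    _ ≤ (0.9 : ℝ) ^ m * 0.81 := by gcongr
    _ = (0.9 : ℝ) ^ (m + 2) := by ring

/-- For every integer k ≥ 3,
(1 − (0.9^k/(k−1))^{1/(k−2)})^{k−1} < 0.96^k. -/
theorem numerical_inequality :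
    ∀ k : ℕ, 3 ≤ k →
      (1 - ((0.9 : ℝ) ^ k / ((k : ℝ) - 1)) ^ ((1 : ℝ) / ((k : ℝ) - 2))) ^ (k - 1) <
        (0.96 : ℝ) ^ k := by
  intro k hk
  obtain ⟨m, rfl⟩ : ∃ m, k = m + 2 := ⟨k - 2, by omega⟩
  have hm : m ≠ 0 := by omega
  rw [show m + 2 - 1 = m + 1 by omega]
  push_cast
  rw [show (m : ℝ) + 2 - 1 = m + 1 by ring, show (m : ℝ) + 2 - 2 = m by ring]
  set a := ((0.9 : ℝ) ^ (m + 2) / ((m : ℝ) + 1)) ^ (1 / (m : ℝ))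
  have ha : 0.36 ≤ a := le_rpow_one_div_of_pow_le (by norm_num) hm (pow_le_pow_add_two_div_succ hm)
  have ha1 : a ≤ 1 := by
    refine Real.rpow_le_one (by positivity) ?_ (by positivity)
    rw [div_le_one (by positivity)]
    linarith [pow_le_one₀ (n := m + 2) (by norm_num : (0 : ℝ) ≤ 0.9) (by norm_num),
      (Nat.cast_nonneg m : (0 : ℝ) ≤ m)]
  calc (1 - a) ^ (m + 1) ≤ (0.64 : ℝ) ^ (m + 1) := by gcongr; linarith
    _ < (0.96 : ℝ) ^ (m + 2) := pow_succ_lt_pow_add_two (by norm_num) (by norm_num) (by norm_num) m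
end
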